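/- arXiv:1203.2455 — 2 statements merged into one kernel-verified Lean document; each statement's English description precedes it below -/
import Mathlib

section
/- Let A ⋈ H be a double cross product of Hopf algebras and σ a coquasitriangular structure on A ⋈ H. Define p(a, b) = σ(a ⊗ 1, b ⊗ 1), τ(h, g) = σ(1 ⊗ h, 1 ⊗ g), u(a, h) = σ(a ⊗ 1, 1 ⊗ h), v(h, a) = σ(1 ⊗ h, a ⊗ 1). Then (A, p) and (H, τ) are coquasitriangular Hopf algebras, u is a skew pairing on (A, H), v is a skew pairing on (H, A), and σ(a ⊗ h, b ⊗ g) = u(a₍₁₎, g₍₁₎) p(a₍₂₎, b₍₁₎) τ(h₍₁₎, g₍₂₎) v(h₍₂₎, b₍₂₎) for all a, b ∈ A, h, g ∈ H. -/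
open TensorProduct Coalgebra LinearMap Finset HopfAlgebra

noncomputable section

variable {k : Type} [Field k]

/-- Representations of `comul a` with index type in `Type 0`. -/
structure Repr0 (k : Type) [CommSemiring k] {A : Type} [AddCommMonoid A] [Module k A]
    [CoalgebraStruct k A] (a : A) where
  {ι : Type}
  (index : Finset ι)
  (left : ι → A)
  (right : ι → A)
  (eq : ∑ i ∈ index, left i ⊗ₜ[k] right i = CoalgebraStruct.comul a)

/-- A skew pairing `λ : A ⊗ H → k` (given as a bilinear map), satisfying (BR1)–(BR4),
with Sweedler sums expressed via arbitrary representations of the comultiplication. -/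
structure IsSkewPairing {A H : Type} [Ring A] [Ring H]
    [Bialgebra k A] [Bialgebra k H] (lam : A →ₗ[k] H →ₗ[k] k) : Prop where
  br1 : ∀ (x y : A) (z : H) (rz : Repr0 k z),
    lam (x * y) z = ∑ i ∈ rz.index, lam x (rz.left i) * lam y (rz.right i)
  br2 : ∀ z : H, lam 1 z = counit (R := k) z
  br3 : ∀ (x : A) (l z : H) (rx : Repr0 k x),
    lam x (l * z) = ∑ i ∈ rx.index, lam (rx.left i) z * lam (rx.right i) l
  br4 : ∀ y : A, lam y 1 = counit (R := k) y

/-- A coquasitriangular (braided) structure on a bialgebra `H` : (BR1)–(BR5). -/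
structure IsCQT {H : Type} [Ring H] [Bialgebra k H]
    (p : H →ₗ[k] H →ₗ[k] k) extends IsSkewPairing p : Prop where
  br5 : ∀ (x y : H) (rx : Repr0 k x) (ry : Repr0 k y),
    ∑ i ∈ rx.index, ∑ j ∈ ry.index, p (rx.left i) (ry.left j) • (rx.right i * ry.right j)
    = ∑ i ∈ rx.index, ∑ j ∈ ry.index, p (rx.right i) (ry.right j) • (ry.left j * rx.left i)

/-- Coquasitriangularity (BR1)–(BR5) for a coalgebra `D` equipped with a (not necessarily
associative, not necessarily typeclass-registered) multiplication `mul` and unit `one`. -/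
structure IsCQTMul {D : Type} [AddCommGroup D] [Module k D] [Coalgebra k D]
    (mul : D →ₗ[k] D →ₗ[k] D) (one : D) (σ : D →ₗ[k] D →ₗ[k] k) : Prop where
  br1 : ∀ (x y z : D) (rz : Repr0 k z),
    σ (mul x y) z = ∑ i ∈ rz.index, σ x (rz.left i) * σ y (rz.right i)
  br2 : ∀ z : D, σ one z = counit (R := k) z
  br3 : ∀ (x l z : D) (rx : Repr0 k x),
    σ x (mul l z) = ∑ i ∈ rx.index, σ (rx.left i) z * σ (rx.right i) l
  br4 : ∀ y : D, σ y one = counit (R := k) y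
  br5 : ∀ (x y : D) (rx : Repr0 k x) (ry : Repr0 k y),
    ∑ i ∈ rx.index, ∑ j ∈ ry.index, σ (rx.left i) (ry.left j) • mul (rx.right i) (ry.right j)
    = ∑ i ∈ rx.index, ∑ j ∈ ry.index, σ (rx.right i) (ry.right j) • mul (ry.left j) (rx.left i)

/-- A matched pair of bialgebras `(A, H, ⊳, ⊲)` : `lact = ⊳ : H ⊗ A → A` is a left
`H`-module coalgebra structure, `ract = ⊲ : H ⊗ A → H` is a right `A`-module coalgebra
structure, together with the matched pair compatibility conditions. -/
structure IsMatchedPair {A H : Type} [Ring A] [Ring H] [Bialgebra k A] [Bialgebra k H]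
    (lact : H →ₗ[k] A →ₗ[k] A) (ract : H →ₗ[k] A →ₗ[k] H) : Prop where
  ract_unit : ∀ h : H, ract h 1 = h
  ract_act : ∀ (h : H) (a b : A), ract h (a * b) = ract (ract h a) b
  ract_comul : ∀ (h : H) (a : A) (rh : Repr0 k h) (ra : Repr0 k a),
    comul (R := k) (ract h a)
      = ∑ i ∈ rh.index, ∑ j ∈ ra.index,
          ract (rh.left i) (ra.left j) ⊗ₜ[k] ract (rh.right i) (ra.right j)
  ract_counit : ∀ (h : H) (a : A),
    counit (R := k) (ract h a) = counit (R := k) h * counit (R := k) a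
  lact_unit : ∀ a : A, lact 1 a = a
  lact_act : ∀ (g h : H) (a : A), lact (g * h) a = lact g (lact h a)
  lact_comul : ∀ (h : H) (a : A) (rh : Repr0 k h) (ra : Repr0 k a),
    comul (R := k) (lact h a)
      = ∑ i ∈ rh.index, ∑ j ∈ ra.index,
          lact (rh.left i) (ra.left j) ⊗ₜ[k] lact (rh.right i) (ra.right j)
  lact_counit : ∀ (h : H) (a : A),
    counit (R := k) (lact h a) = counit (R := k) h * counit (R := k) a
  lact_mul : ∀ (h : H) (a b : A) (rh : Repr0 k h) (ra : Repr0 k a),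
    lact h (a * b) = ∑ i ∈ rh.index, ∑ j ∈ ra.index,
      lact (rh.left i) (ra.left j) * lact (ract (rh.right i) (ra.right j)) b
  mul_ract : ∀ (g h : H) (a : A) (rh : Repr0 k h) (ra : Repr0 k a),
    ract (g * h) a = ∑ i ∈ rh.index, ∑ j ∈ ra.index,
      ract g (lact (rh.left i) (ra.left j)) * ract (rh.right i) (ra.right j)
  lact_one : ∀ h : H, lact h 1 = counit (R := k) h • (1 : A)
  one_ract : ∀ a : A, ract 1 a = counit (R := k) a • (1 : H)
  sym : ∀ (h : H) (a : A) (rh : Repr0 k h) (ra : Repr0 k a),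
    ∑ i ∈ rh.index, ∑ j ∈ ra.index,
        ract (rh.left i) (ra.left j) ⊗ₜ[k] lact (rh.right i) (ra.right j)
    = ∑ i ∈ rh.index, ∑ j ∈ ra.index,
        ract (rh.right i) (ra.right j) ⊗ₜ[k] lact (rh.left i) (ra.left j)

/-- `mulD` is the double cross product multiplication
`(a ⊗ h)(b ⊗ g) = a(h₍₁₎ ⊳ b₍₁₎) ⊗ (h₍₂₎ ⊲ b₍₂₎)g` on `A ⊗ H`. -/
def IsDCPMul {A H : Type} [Ring A] [Ring H] [Bialgebra k A] [Bialgebra k H]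
    (lact : H →ₗ[k] A →ₗ[k] A) (ract : H →ₗ[k] A →ₗ[k] H)
    (mulD : A ⊗[k] H →ₗ[k] A ⊗[k] H →ₗ[k] A ⊗[k] H) : Prop :=
  ∀ (a b : A) (h g : H) (rh : Repr0 k h) (rb : Repr0 k b),
    mulD (a ⊗ₜ[k] h) (b ⊗ₜ[k] g) = ∑ i ∈ rh.index, ∑ j ∈ rb.index,
      (a * lact (rh.left i) (rb.left j)) ⊗ₜ[k] (ract (rh.right i) (rb.right j) * g)

/-- The right action `h ⊲ a = h₍₂₎ λ⁻¹(h₍₁₎, a₍₁₎) λ(h₍₃₎, a₍₂₎)` induced by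
a skew pairing `λ : H ⊗ A → k` (where `λ⁻¹ = λ ∘ (S_H ⊗ id)`). -/
def IsQDRact {A H : Type} [Ring A] [Ring H] [HopfAlgebra k A] [HopfAlgebra k H]
    (lam : H →ₗ[k] A →ₗ[k] k) (ract : H →ₗ[k] A →ₗ[k] H) : Prop :=
  ∀ (h : H) (a : A) (rh : Repr0 k h)
    (rh1 : ∀ i : rh.ι, Repr0 k (rh.left i)) (ra : Repr0 k a),
    ract h a = ∑ i ∈ rh.index, ∑ j ∈ (rh1 i).index, ∑ l ∈ ra.index,
      (lam (antipode (R := k) ((rh1 i).left j)) (ra.left l) * lam (rh.right i) (ra.right l))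
        • (rh1 i).right j

/-- The left action `h ⊳ a = a₍₂₎ λ⁻¹(h₍₁₎, a₍₁₎) λ(h₍₂₎, a₍₃₎)` induced by
a skew pairing `λ : H ⊗ A → k`. -/
def IsQDLact {A H : Type} [Ring A] [Ring H] [HopfAlgebra k A] [HopfAlgebra k H]
    (lam : H →ₗ[k] A →ₗ[k] k) (lact : H →ₗ[k] A →ₗ[k] A) : Prop :=
  ∀ (h : H) (a : A) (rh : Repr0 k h) (ra : Repr0 k a)
    (ra1 : ∀ l : ra.ι, Repr0 k (ra.left l)),
    lact h a = ∑ i ∈ rh.index, ∑ l ∈ ra.index, ∑ j ∈ (ra1 l).index,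
      (lam (antipode (R := k) (rh.left i)) ((ra1 l).left j) * lam (rh.right i) (ra.right l))
        • (ra1 l).right j

/-- `σ(a ⊗ h, b ⊗ g) = u(a₍₁₎, g₍₁₎) p(a₍₂₎, b₍₁₎) τ(h₍₁₎, g₍₂₎) v(h₍₂₎, b₍₂₎)`. -/
def IsSigma {A H : Type} [Ring A] [Ring H] [Bialgebra k A] [Bialgebra k H]
    (u : A →ₗ[k] H →ₗ[k] k) (p : A →ₗ[k] A →ₗ[k] k)
    (τ : H →ₗ[k] H →ₗ[k] k) (v : H →ₗ[k] A →ₗ[k] k)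
    (σ : A ⊗[k] H →ₗ[k] A ⊗[k] H →ₗ[k] k) : Prop :=
  ∀ (a b : A) (h g : H) (ra : Repr0 k a) (rb : Repr0 k b)
    (rh : Repr0 k h) (rg : Repr0 k g),
    σ (a ⊗ₜ[k] h) (b ⊗ₜ[k] g) = ∑ m ∈ ra.index, ∑ n ∈ rb.index, ∑ i ∈ rh.index, ∑ j ∈ rg.index,
      u (ra.left m) (rg.left j) * p (ra.right m) (rb.left n)
        * τ (rh.left i) (rg.right j) * v (rh.right i) (rb.right n)


/-!
The maps `a ↦ a ⊗ 1` and `h ↦ 1 ⊗ h` are injective coalgebra maps into `A ⋈ H`, and the unit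
axioms of the matched pair make them multiplicative. Pulling `σ` back along such maps preserves
(BR1)–(BR4), and also (BR5) when both arguments come from the same injective map. The formula for
`σ` comes from the factorization `a ⊗ h = (a ⊗ 1)(1 ⊗ h)`: (BR1) splits the first argument, and
(BR3) applied to `b ⊗ g = (b ⊗ 1)(1 ⊗ g)` splits the second.
-/

namespace Repr0

variable {R : Type} [CommSemiring R] {A B : Type} [AddCommMonoid A] [Module R A]
  [AddCommMonoid B] [Module R B]

def toRepr [CoalgebraStruct R A] {a : A} (r : Repr0 R a) : Coalgebra.Repr R a r.ι :=
  ⟨r.index, r.left, r.right, r.eq⟩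

def ofRepr [CoalgebraStruct R A] {a : A} {ι : Type} (r : Coalgebra.Repr R a ι) : Repr0 R a :=
  ⟨r.index, r.left, r.right, r.eq⟩

variable (R) in
def arbitrary [CoalgebraStruct R A] (a : A) : Repr0 R a :=
  ofRepr (ℛ R a)

def tmul [CoalgebraStruct R A] [CoalgebraStruct R B] {a : A} {b : B} (ra : Repr0 R a)
    (rb : Repr0 R b) : Repr0 R (a ⊗ₜ[R] b) where
  index := ra.index ×ˢ rb.index
  left i := ra.left i.1 ⊗ₜ rb.left i.2
  right i := ra.right i.1 ⊗ₜ rb.right i.2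
  eq := by
    simp [← ra.eq, ← rb.eq, TensorProduct.sum_tmul ra.index, TensorProduct.tmul_sum,
      ← Finset.sum_product']

def induced [Coalgebra R A] [Coalgebra R B] {a : A} (r : Repr0 R a) (φ : A →ₗc[R] B) :
    Repr0 R (φ a) :=
  ofRepr (r.toRepr.induced φ)

end Repr0

def Repr0.one (R A : Type) [CommSemiring R] [Semiring A] [Bialgebra R A] : Repr0 R (1 : A) where
  index := Finset.univ (α := Unit)
  left _ := 1
  right _ := 1
  eq := by simp [Bialgebra.comul_one, Algebra.TensorProduct.one_def]

section Inclusions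

variable (R A H : Type) [CommSemiring R] [Semiring A] [Semiring H] [Bialgebra R A]
  [Bialgebra R H]

noncomputable def includeLeftCoalgHom : A →ₗc[R] A ⊗[R] H :=
  (Coalgebra.TensorProduct.map (CoalgHom.id R A) (Bialgebra.unitBialgHom R H : R →ₗc[R] H)).comp
    (Coalgebra.TensorProduct.rid R R A).symm.toCoalgHom

noncomputable def includeRightCoalgHom : H →ₗc[R] A ⊗[R] H :=
  (Coalgebra.TensorProduct.map (Bialgebra.unitBialgHom R A : R →ₗc[R] A) (CoalgHom.id R H)).comp
    (Coalgebra.TensorProduct.lid R H).symm.toCoalgHom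

variable {R A H}

@[simp]
theorem includeLeftCoalgHom_apply (a : A) : includeLeftCoalgHom R A H a = a ⊗ₜ 1 := by
  simp [includeLeftCoalgHom, Bialgebra.unitBialgHom]

@[simp]
theorem includeRightCoalgHom_apply (h : H) : includeRightCoalgHom R A H h = 1 ⊗ₜ h := by
  simp [includeRightCoalgHom, Bialgebra.unitBialgHom]

theorem includeLeftCoalgHom_injective : Function.Injective (includeLeftCoalgHom R A H) :=
  Function.LeftInverse.injective (g := TensorProduct.rid R A ∘ₗ lTensor A counit) fun a => by simp

theorem includeRightCoalgHom_injective : Function.Injective (includeRightCoalgHom R A H) :=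
  Function.LeftInverse.injective (g := TensorProduct.lid R H ∘ₗ rTensor H counit) fun h => by simp

end Inclusions

namespace IsCQTMul

variable {D A H : Type} [AddCommGroup D] [Module k D] [Coalgebra k D]
  {mul : D →ₗ[k] D →ₗ[k] D} {one : D} {σ : D →ₗ[k] D →ₗ[k] k}
  [Ring A] [Ring H] [Bialgebra k A] [Bialgebra k H]

theorem isSkewPairing_compl₁₂ (hσ : IsCQTMul mul one σ) {f : A →ₗc[k] D} {g : H →ₗc[k] D}
    (hf_mul : ∀ x y, f (x * y) = mul (f x) (f y)) (hf_one : f 1 = one)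
    (hg_mul : ∀ x y, g (x * y) = mul (g x) (g y)) (hg_one : g 1 = one) :
    IsSkewPairing (σ.compl₁₂ (f : A →ₗ[k] D) (g : H →ₗ[k] D)) where
  br1 x y z rz := by
    simpa [hf_mul, Repr0.induced, Repr0.ofRepr, Repr0.toRepr] using
      hσ.br1 (f x) (f y) (g z) (rz.induced g)
  br2 z := by simp [hf_one, hσ.br2]
  br3 x l z rx := by
    simpa [hg_mul, Repr0.induced, Repr0.ofRepr, Repr0.toRepr] using
      hσ.br3 (f x) (g l) (g z) (rx.induced f)
  br4 y := by simp [hg_one, hσ.br4]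

theorem isCQT_compl₁₂ (hσ : IsCQTMul mul one σ) {f : A →ₗc[k] D}
    (hf_mul : ∀ x y, f (x * y) = mul (f x) (f y)) (hf_one : f 1 = one)
    (hf_inj : Function.Injective f) :
    IsCQT (σ.compl₁₂ (f : A →ₗ[k] D) (f : A →ₗ[k] D)) where
  toIsSkewPairing := hσ.isSkewPairing_compl₁₂ hf_mul hf_one hf_mul hf_one
  br5 x y rx ry := by
    apply hf_inj
    simpa [hf_mul, Repr0.induced, Repr0.ofRepr, Repr0.toRepr] using
      hσ.br5 (f x) (f y) (rx.induced f) (ry.induced f)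

end IsCQTMul

namespace IsDCPMul

variable {A H : Type} [Ring A] [Ring H] [Bialgebra k A] [Bialgebra k H]
  {lact : H →ₗ[k] A →ₗ[k] A} {ract : H →ₗ[k] A →ₗ[k] H}
  {mulD : A ⊗[k] H →ₗ[k] A ⊗[k] H →ₗ[k] A ⊗[k] H}

theorem tmul_one_mul (hmulD : IsDCPMul lact ract mulD) (hmp : IsMatchedPair lact ract)
    (a b : A) (g : H) : mulD (a ⊗ₜ 1) (b ⊗ₜ g) = (a * b) ⊗ₜ g := by
  have hb := congrArg (lTensor A (toSpanSingleton k H g))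
    (sum_map_tmul_counit_eq (mulLeft k a) b (repr := ℛ k b))
  simp only [map_sum, lTensor_tmul, toSpanSingleton_apply, mulLeft_apply, one_smul] at hb
  simpa [hmulD a b 1 g (Repr0.one k H) (Repr0.arbitrary k b), Repr0.one, Repr0.arbitrary,
    Repr0.ofRepr, hmp.lact_unit, hmp.one_ract, TensorProduct.tmul_smul] using hb

theorem mul_one_tmul (hmulD : IsDCPMul lact ract mulD) (hmp : IsMatchedPair lact ract)
    (a : A) (h g : H) : mulD (a ⊗ₜ h) (1 ⊗ₜ g) = a ⊗ₜ (h * g) := by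
  have hh := congrArg (rTensor H (toSpanSingleton k A a))
    (sum_counit_tmul_map_eq (mulRight k g) h (repr := ℛ k h))
  simp only [map_sum, rTensor_tmul, toSpanSingleton_apply, mulRight_apply, one_smul] at hh
  simpa [hmulD a 1 h g (Repr0.arbitrary k h) (Repr0.one k A), Repr0.one, Repr0.arbitrary,
    Repr0.ofRepr, hmp.lact_one, hmp.ract_unit, TensorProduct.smul_tmul'] using hh

theorem tmul_one_mul_one_tmul (hmulD : IsDCPMul lact ract mulD) (hmp : IsMatchedPair lact ract)
    (a : A) (h : H) : mulD (a ⊗ₜ 1) (1 ⊗ₜ h) = a ⊗ₜ h := by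
  rw [hmulD.mul_one_tmul hmp, one_mul]

theorem includeLeftCoalgHom_mul (hmulD : IsDCPMul lact ract mulD) (hmp : IsMatchedPair lact ract)
    (x y : A) :
    includeLeftCoalgHom k A H (x * y) =
      mulD (includeLeftCoalgHom k A H x) (includeLeftCoalgHom k A H y) := by
  simp [hmulD.tmul_one_mul hmp]

theorem includeRightCoalgHom_mul (hmulD : IsDCPMul lact ract mulD) (hmp : IsMatchedPair lact ract)
    (x y : H) :
    includeRightCoalgHom k A H (x * y) =
      mulD (includeRightCoalgHom k A H x) (includeRightCoalgHom k A H y) := by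
  simp [hmulD.mul_one_tmul hmp]

theorem isSigma (hmulD : IsDCPMul lact ract mulD) (hmp : IsMatchedPair lact ract)
    {σ : A ⊗[k] H →ₗ[k] A ⊗[k] H →ₗ[k] k} (hσ : IsCQTMul mulD (1 ⊗ₜ 1) σ) :
    IsSigma (σ.compl₁₂ (includeLeftCoalgHom k A H : A →ₗ[k] A ⊗[k] H)
        (includeRightCoalgHom k A H : H →ₗ[k] A ⊗[k] H))
      (σ.compl₁₂ (includeLeftCoalgHom k A H : A →ₗ[k] A ⊗[k] H)
        (includeLeftCoalgHom k A H : A →ₗ[k] A ⊗[k] H))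
      (σ.compl₁₂ (includeRightCoalgHom k A H : H →ₗ[k] A ⊗[k] H)
        (includeRightCoalgHom k A H : H →ₗ[k] A ⊗[k] H))
      (σ.compl₁₂ (includeRightCoalgHom k A H : H →ₗ[k] A ⊗[k] H)
        (includeLeftCoalgHom k A H : A →ₗ[k] A ⊗[k] H)) σ := by
  intro a b h g ra rb rh rg
  have split_left : σ (a ⊗ₜ h) (b ⊗ₜ g) = ∑ n ∈ rb.index, ∑ j ∈ rg.index,
      σ (a ⊗ₜ 1) (rb.left n ⊗ₜ rg.left j) * σ (1 ⊗ₜ h) (rb.right n ⊗ₜ rg.right j) := by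
    rw [← hmulD.tmul_one_mul_one_tmul hmp a h, hσ.br1 _ _ _ (rb.tmul rg), Repr0.tmul,
      sum_product]
  have split_right (x : A ⊗[k] H) (rx : Repr0 k x) (b' : A) (g' : H) :
      σ x (b' ⊗ₜ g') = ∑ m ∈ rx.index, σ (rx.left m) (1 ⊗ₜ g') * σ (rx.right m) (b' ⊗ₜ 1) := by
    rw [← hmulD.tmul_one_mul_one_tmul hmp b' g', hσ.br3 _ _ _ rx]
  rw [split_left]
  simp_rw [split_right _ (ra.tmul (Repr0.one k H)), split_right _ ((Repr0.one k A).tmul rh)]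
  simp only [Repr0.tmul, Repr0.one, sum_product, univ_unique, sum_singleton, sum_mul_sum,
    compl₁₂_apply, CoalgHom.coe_toLinearMap, includeLeftCoalgHom_apply,
    includeRightCoalgHom_apply, ← mul_assoc]
  simp_rw [sum_comm (s := rg.index) (t := ra.index)]
  rw [sum_comm (s := rb.index)]
  simp_rw [sum_comm (s := rg.index) (t := rh.index)]

end IsDCPMul

/-- any coquasitriangular structure `σ` on a double cross product `A ⋈ H`
restricts to coquasitriangular structures `p`, `τ` on `A`, `H`, skew pairings `u`, `v`,
and `σ` is recovered by the formula
`σ(a ⊗ h, b ⊗ g) = u(a₍₁₎, g₍₁₎) p(a₍₂₎, b₍₁₎) τ(h₍₁₎, g₍₂₎) v(h₍₂₎, b₍₂₎)`. -/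
theorem double_cross_product_cqt_decomposition {k A H : Type} [Field k] [Ring A] [Ring H]
    [HopfAlgebra k A] [HopfAlgebra k H]
    (lact : H →ₗ[k] A →ₗ[k] A) (ract : H →ₗ[k] A →ₗ[k] H)
    (hmp : IsMatchedPair lact ract)
    (mulD : A ⊗[k] H →ₗ[k] A ⊗[k] H →ₗ[k] A ⊗[k] H) (hmulD : IsDCPMul lact ract mulD)
    (σ : A ⊗[k] H →ₗ[k] A ⊗[k] H →ₗ[k] k)
    (hσ : IsCQTMul mulD ((1 : A) ⊗ₜ[k] (1 : H)) σ)
    (p : A →ₗ[k] A →ₗ[k] k) (hpdef : ∀ a b : A, p a b = σ (a ⊗ₜ[k] (1 : H)) (b ⊗ₜ[k] (1 : H)))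
    (τ : H →ₗ[k] H →ₗ[k] k) (hτdef : ∀ h g : H, τ h g = σ ((1 : A) ⊗ₜ[k] h) ((1 : A) ⊗ₜ[k] g))
    (u : A →ₗ[k] H →ₗ[k] k) (hudef : ∀ (a : A) (h : H), u a h = σ (a ⊗ₜ[k] (1 : H)) ((1 : A) ⊗ₜ[k] h))
    (v : H →ₗ[k] A →ₗ[k] k) (hvdef : ∀ (h : H) (a : A), v h a = σ ((1 : A) ⊗ₜ[k] h) (a ⊗ₜ[k] (1 : H))) :
    IsCQT p ∧ IsCQT τ ∧ IsSkewPairing u ∧ IsSkewPairing v ∧ IsSigma u p τ v σ := by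
  let iA : A →ₗc[k] A ⊗[k] H := includeLeftCoalgHom k A H
  let iH : H →ₗc[k] A ⊗[k] H := includeRightCoalgHom k A H
  obtain rfl : p = σ.compl₁₂ (iA : A →ₗ[k] A ⊗[k] H) iA := ext₂ fun a b => by simp [iA, hpdef]
  obtain rfl : τ = σ.compl₁₂ (iH : H →ₗ[k] A ⊗[k] H) iH := ext₂ fun h g => by simp [iH, hτdef]
  obtain rfl : u = σ.compl₁₂ (iA : A →ₗ[k] A ⊗[k] H) iH := ext₂ fun a h => by simp [iA, iH, hudef]
  obtain rfl : v = σ.compl₁₂ (iH : H →ₗ[k] A ⊗[k] H) iA := ext₂ fun h a => by simp [iA, iH, hvdef]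
  have hA_mul := hmulD.includeLeftCoalgHom_mul hmp
  have hH_mul := hmulD.includeRightCoalgHom_mul hmp
  have hA_one : iA 1 = 1 ⊗ₜ 1 := includeLeftCoalgHom_apply 1
  have hH_one : iH 1 = 1 ⊗ₜ 1 := includeRightCoalgHom_apply 1
  exact ⟨hσ.isCQT_compl₁₂ hA_mul hA_one includeLeftCoalgHom_injective,
    hσ.isCQT_compl₁₂ hH_mul hH_one includeRightCoalgHom_injective,
    hσ.isSkewPairing_compl₁₂ hA_mul hA_one hH_mul hH_one,
    hσ.isSkewPairing_compl₁₂ hH_mul hH_one hA_mul hA_one,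
    hmulD.isSigma hmp hσ⟩

end
end

section
/- Let k be a field of characteristic 0 and k[X] the polynomial Hopf algebra with X primitive, i.e. Δ(Xⁿ) = Σ_{j=0}^{n} C(n,j) Xʲ ⊗ X^{n−j}, ε(Xⁿ) = δ_{n,0}, S(Xⁿ) = (−1)ⁿXⁿ. For any α ∈ k, the bilinear map τ determined by τ(Xⁱ, Xʲ) = 0 if i ≠ j and τ(Xⁱ, Xⁱ) = i! αⁱ is a coquasitriangular structure on k[X]. -/
open TensorProduct Coalgebra LinearMap Finset HopfAlgebra

noncomputable section

variable {k : Type} [Field k]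

/-! On the basis `xⁿ` one has `Δ(xⁿ) = ∑ C(n, j) xʲ ⊗ xⁿ⁻ʲ` and `ε(xⁿ) = δₙ₀`, so (BR1) reduces on
basis elements to `C(p + q, p) p! q! = (p + q)!` and (BR2) is immediate. The algebra is commutative and
cocommutative and `τ` is symmetric, so (BR3) and (BR4) are (BR1) and (BR2) with the arguments swapped,
and (BR5) holds for any bilinear form. -/

section Sweedler

variable {R A M : Type} [CommSemiring R] [AddCommMonoid A] [Module R A] [CoalgebraStruct R A]
  [AddCommMonoid M] [Module R M]

theorem Repr0.sum_apply {a : A} (r : Repr0 R a) (f : A ⊗[R] A →ₗ[R] M) :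
    ∑ i ∈ r.index, f (r.left i ⊗ₜ r.right i) = f (comul a) := by
  rw [← r.eq, map_sum]

theorem Repr0.sum_sum_apply₂ {a b : A} (r : Repr0 R a) (s : Repr0 R b)
    (β : A ⊗[R] A →ₗ[R] A ⊗[R] A →ₗ[R] M) :
    ∑ i ∈ r.index, ∑ j ∈ s.index, β (r.left i ⊗ₜ r.right i) (s.left j ⊗ₜ s.right j)
      = β (comul a) (comul b) := by
  calc _ = ∑ i ∈ r.index, β.flip (comul b) (r.left i ⊗ₜ r.right i) :=
        Finset.sum_congr rfl fun i _ => s.sum_apply (β _)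
    _ = _ := r.sum_apply _

end Sweedler

section CommCocomm

variable {H : Type} [CommRing H] [Bialgebra k H] [Coalgebra.IsCocomm k H]

theorem br5_of_isCocomm (τ : H →ₗ[k] H →ₗ[k] k) (x y : H) (rx : Repr0 k x) (ry : Repr0 k y) :
    ∑ i ∈ rx.index, ∑ j ∈ ry.index, τ (rx.left i) (ry.left j) • (rx.right i * ry.right j)
      = ∑ i ∈ rx.index, ∑ j ∈ ry.index, τ (rx.right i) (ry.right j) • (ry.left j * rx.left i) := by
  let β : H ⊗[k] H →ₗ[k] H ⊗[k] H →ₗ[k] H :=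
    (LinearMap.BilinMap.tmul τ (LinearMap.mul k H)).compr₂ (TensorProduct.lid k H).toLinearMap
  have hβ : ∀ a b c d : H, β (a ⊗ₜ b) (c ⊗ₜ d) = τ a c • (b * d) := fun _ _ _ _ => rfl
  let β' := β.compl₁₂ (TensorProduct.comm k H H).toLinearMap (TensorProduct.comm k H H).toLinearMap
  calc _ = β (comul x) (comul y) := by simp_rw [← hβ, rx.sum_sum_apply₂ ry]
    _ = β' (comul x) (comul y) := by
      simp only [β', LinearMap.compl₁₂_apply, LinearEquiv.coe_coe, Coalgebra.comm_comul]
    _ = _ := by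
      rw [← rx.sum_sum_apply₂ ry β']
      simp [β', hβ, mul_comm]

theorem IsCQT.of_symm (τ : H →ₗ[k] H →ₗ[k] k) (hsymm : ∀ x y, τ x y = τ y x)
    (hmul : ∀ x y z, τ (x * y) z = LinearMap.BilinForm.tmul τ τ (x ⊗ₜ y) (comul z))
    (hone : ∀ z, τ 1 z = counit z) : IsCQT τ where
  br1 x y z rz := by
    rw [hmul, ← rz.sum_apply]
    simp [mul_comm]
  br2 := hone
  br3 x l z rx := by
    rw [hsymm, mul_comm, hmul, ← rx.sum_apply]
    simp [hsymm z, hsymm l, mul_comm]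
  br4 y := by rw [hsymm, hone]
  br5 := br5_of_isCocomm τ

end CommCocomm

section Primitive

variable {R A : Type} [CommSemiring R] [Semiring A] [Bialgebra R A] {x : A}

theorem comul_pow_of_comul_eq (hx : comul x = x ⊗ₜ[R] 1 + 1 ⊗ₜ[R] x) (n : ℕ) :
    comul (R := R) (x ^ n)
      = ∑ m ∈ antidiagonal n, n.choose m.1 • ((x ^ m.1) ⊗ₜ[R] (x ^ m.2)) := by
  have hcomm : Commute (x ⊗ₜ[R] (1 : A)) (1 ⊗ₜ x) := by
    simp [Commute, SemiconjBy, Algebra.TensorProduct.tmul_mul_tmul]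
  simp [Bialgebra.comul_pow, hx, hcomm.add_pow', Algebra.TensorProduct.tmul_pow,
    Algebra.TensorProduct.tmul_mul_tmul]

theorem isCocomm_of_basis_pow (hx : comul x = x ⊗ₜ[R] 1 + 1 ⊗ₜ[R] x)
    (B : Module.Basis ℕ R A) (hB : ∀ n, B n = x ^ n) : Coalgebra.IsCocomm R A where
  comm_comp_comul := B.ext fun n => by
    have hx_symm : Algebra.TensorProduct.comm R A A (comul x) = comul x := by simp [hx, add_comm]
    show Algebra.TensorProduct.comm R A A (comul (B n)) = comul (B n)
    rw [hB, Bialgebra.comul_pow, map_pow, hx_symm]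

theorem sum_antidiagonal_choose_factorial_pow (α : R) (p q n : ℕ) :
    ∑ m ∈ antidiagonal n, n.choose m.1 •
        ((if q = m.2 then (q.factorial : R) * α ^ q else 0) *
          (if p = m.1 then (p.factorial : R) * α ^ p else 0))
      = if p + q = n then ((p + q).factorial : R) * α ^ (p + q) else 0 := by
  have hsupp : ∀ m : ℕ × ℕ, (q = m.2 ∧ p = m.1) ↔ (p, q) = m := by simp [Prod.ext_iff, and_comm]
  simp_rw [ite_zero_mul_ite_zero, smul_ite, smul_zero, hsupp, Finset.sum_ite_eq,
    Finset.HasAntidiagonal.mem_antidiagonal]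
  split_ifs with hn
  · subst hn
    rw [add_comm p q, nsmul_eq_mul, ← Nat.add_choose_mul_factorial_mul_factorial q p]
    push_cast
    ring
  · rfl

end Primitive

section ExponentialPairing

variable {R A : Type} [CommSemiring R] [Semiring A] [Bialgebra R A] {x : A}
  {B : Module.Basis ℕ R A} {α : R} {τ : A →ₗ[R] A →ₗ[R] R}

theorem pairing_comm_of_eq_ite (hB : ∀ n, B n = x ^ n)
    (hτ : ∀ i j : ℕ, τ (x ^ i) (x ^ j) = if i = j then (i.factorial : R) * α ^ i else 0)
    (u v : A) : τ u v = τ v u := by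
  have h : τ = τ.flip := LinearMap.ext_basis B B fun i j => by
    rw [LinearMap.flip_apply, hB, hB, hτ, hτ]
    by_cases hij : i = j
    · rw [hij]
    · rw [if_neg hij, if_neg (Ne.symm hij)]
  exact congr($h u v)

theorem pairing_mul_of_eq_ite (hx : comul x = x ⊗ₜ[R] 1 + 1 ⊗ₜ[R] x) (hB : ∀ n, B n = x ^ n)
    (hτ : ∀ i j : ℕ, τ (x ^ i) (x ^ j) = if i = j then (i.factorial : R) * α ^ i else 0)
    (u v z : A) : τ (u * v) z = LinearMap.BilinForm.tmul τ τ (u ⊗ₜ v) (comul z) := by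
  have h : (LinearMap.mul R A).compr₂ τ
      = (TensorProduct.mk R A A).compr₂ ((LinearMap.BilinForm.tmul τ τ).compl₂ comul) :=
    LinearMap.ext_basis B B fun p q => B.ext fun n => by
      simp only [hB, LinearMap.compr₂_apply, LinearMap.mul_apply', TensorProduct.mk_apply,
        LinearMap.compl₂_apply, comul_pow_of_comul_eq hx, map_sum, map_nsmul,
        LinearMap.BilinForm.tensorDistrib_tmul, hτ, smul_eq_mul, ← pow_add]
      exact (sum_antidiagonal_choose_factorial_pow α p q n).symm
  exact congr($h u v z)

theorem pairing_one_of_eq_ite (hxε : counit (R := R) x = 0) (hB : ∀ n, B n = x ^ n)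
    (hτ : ∀ i j : ℕ, τ (x ^ i) (x ^ j) = if i = j then (i.factorial : R) * α ^ i else 0)
    (z : A) : τ 1 z = counit z := by
  have h : τ 1 = counit := B.ext fun n => by
    rw [hB, ← pow_zero x, hτ, Bialgebra.counit_pow, hxε, zero_pow_eq]
    simp [eq_comm]
  exact congr($h z)

end ExponentialPairing

theorem polynomial_hopf_cqt_general {k A : Type} [Field k] [CommRing A]
    [HopfAlgebra k A]
    (x : A) (hxΔ : comul (R := k) x = x ⊗ₜ[k] 1 + 1 ⊗ₜ[k] x)
    (hxε : counit (R := k) x = 0)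
    (B : Module.Basis ℕ k A) (hB : ∀ n : ℕ, B n = x ^ n)
    (α : k) (τ : A →ₗ[k] A →ₗ[k] k)
    (hτ : ∀ i j : ℕ, τ (x ^ i) (x ^ j) = if i = j then (i.factorial : k) * α ^ i else 0) :
    IsCQT τ := by
  have := isCocomm_of_basis_pow hxΔ B hB
  exact IsCQT.of_symm τ (pairing_comm_of_eq_ite hB hτ) (pairing_mul_of_eq_ite hxΔ hB hτ)
    (pairing_one_of_eq_ite hxε hB hτ)

/-- on the polynomial Hopf algebra `k[X]` (char `k = 0`, `X` primitive),
`τ(Xⁱ, Xʲ) = δ_{ij} i! αⁱ` is a coquasitriangular structure, for any `α ∈ k`. -/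
theorem polynomial_hopf_cqt {k A : Type} [Field k] [CharZero k] [CommRing A]
    [HopfAlgebra k A]
    (x : A) (hxΔ : comul (R := k) x = x ⊗ₜ[k] 1 + 1 ⊗ₜ[k] x)
    (hxε : counit (R := k) x = 0)
    (hxS : ∀ n : ℕ, antipode (R := k) (x ^ n) = (-1 : A) ^ n * x ^ n)
    (B : Module.Basis ℕ k A) (hB : ∀ n : ℕ, B n = x ^ n)
    (α : k) (τ : A →ₗ[k] A →ₗ[k] k)
    (hτ : ∀ i j : ℕ, τ (x ^ i) (x ^ j) = if i = j then (i.factorial : k) * α ^ i else 0) :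
    IsCQT τ :=
  polynomial_hopf_cqt_general x hxΔ hxε B hB α τ hτ
end
end
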